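/- Let A be a symmetric real d×d matrix, z ∈ ℝ^d, and p(x) = Σ_{j=0}^n α_j T_j(x) with T_j the Chebyshev polynomials of the first kind. Writing z_j = T_j(A)z, ζ_0 = zᵀz, ζ_1 = zᵀAz, we have zᵀ p(A) z = α_0 ζ_0 + α_1 ζ_1 + Σ over even indices 2j with 2 ≤ 2j ≤ n of α_{2j}·(2 z_jᵀ z_j − ζ_0) + Σ over odd indices 2j+1 with 3 ≤ 2j+1 ≤ n of α_{2j+1}·(2 z_jᵀ z_{j+1} − ζ_1). (Correctness of the two-sided evaluation algorithm in the Chebyshev basis.) -/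

import Mathlib

open Matrix Finset Polynomial Polynomial.Chebyshev

lemma sum_range_split_parity {M : Type*} [AddCommMonoid M] (f : ℕ → M) :
    ∀ n : ℕ, 1 ≤ n →
      ∑ j ∈ Finset.range (n + 1), f j =
        f 0 + f 1 + (∑ j ∈ Finset.Icc 1 (n / 2), f (2 * j)) +
          ∑ j ∈ Finset.Icc 1 ((n - 1) / 2), f (2 * j + 1) := by
  intro n
  induction n with
  | zero => omega
  | succ n ih =>
    intro _
    rcases Nat.eq_or_lt_of_le (show 1 ≤ n + 1 by omega) with h | h
    · obtain rfl : n = 0 := by omega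
      simp [Finset.sum_range_succ]
    · have hn : 1 ≤ n := by omega
      rw [Finset.sum_range_succ, ih hn]
      rcases Nat.even_or_odd (n + 1) with he | ho
      · obtain ⟨k, hk⟩ := he
        have h1 : (n + 1) / 2 = n / 2 + 1 := by omega
        have h2 : (n + 1 - 1) / 2 = (n - 1) / 2 := by omega
        have h3 : 2 * (n / 2 + 1) = n + 1 := by omega
        rw [h1, h2, Finset.sum_Icc_succ_top (by omega), h3]
        abel
      · obtain ⟨k, hk⟩ := ho
        have h1 : (n + 1) / 2 = n / 2 := by omega
        have h2 : (n + 1 - 1) / 2 = (n - 1) / 2 + 1 := by omega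
        have h3 : 2 * ((n - 1) / 2 + 1) + 1 = n + 1 := by omega
        rw [h1, h2, Finset.sum_Icc_succ_top (by omega), h3]
        abel

lemma aeval_transpose {d : ℕ} (A : Matrix (Fin d) (Fin d) ℝ) (hA : Aᵀ = A) (p : ℝ[X]) :
    (Polynomial.aeval A p)ᵀ = Polynomial.aeval A p := by
  induction p using Polynomial.induction_on' with
  | add p q hp hq => simp [hp, hq]
  | monomial k a =>
    simp only [Polynomial.aeval_monomial, Matrix.transpose_mul, Matrix.transpose_pow, hA]
    rw [Algebra.algebraMap_eq_smul_one]
    simp [Matrix.transpose_smul, mul_smul_comm, smul_mul_assoc]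

lemma my_sum_mulVec {d : ℕ} (s : Finset ℕ) (f : ℕ → Matrix (Fin d) (Fin d) ℝ)
    (z : Fin d → ℝ) : (∑ j ∈ s, f j) *ᵥ z = ∑ j ∈ s, f j *ᵥ z := by
  induction s using Finset.cons_induction with
  | empty => simp [Matrix.zero_mulVec]
  | cons a s ha ih => simp [Finset.sum_insert ha, Matrix.add_mulVec, ih]

lemma my_dot_sum {d : ℕ} (s : Finset ℕ) (f : ℕ → Fin d → ℝ) (z : Fin d → ℝ) :
    z ⬝ᵥ (∑ j ∈ s, f j) = ∑ j ∈ s, z ⬝ᵥ f j := by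
  induction s using Finset.cons_induction with
  | empty => simp
  | cons a s ha ih => simp [Finset.sum_insert ha, dotProduct_add, ih]

lemma dot_split {d : ℕ} (B C : Matrix (Fin d) (Fin d) ℝ) (hB : Bᵀ = B) (z : Fin d → ℝ) :
    z ⬝ᵥ (B * C) *ᵥ z = (B *ᵥ z) ⬝ᵥ (C *ᵥ z) := by
  rw [← Matrix.mulVec_mulVec, Matrix.dotProduct_mulVec z B, ← hB, Matrix.vecMul_transpose, hB]

theorem two_sided_evaluation_chebyshev (d n : ℕ) (hn : 1 ≤ n)
    (A : Matrix (Fin d) (Fin d) ℝ) (hA : Aᵀ = A) (z : Fin d → ℝ) (α : ℕ → ℝ) :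
    z ⬝ᵥ (∑ j ∈ Finset.range (n + 1), α j • aeval A (T ℝ j)) *ᵥ z =
      α 0 * (z ⬝ᵥ z) + α 1 * (z ⬝ᵥ A *ᵥ z) +
      (∑ j ∈ Finset.Icc 1 (n / 2),
        α (2 * j) * (2 * ((aeval A (T ℝ j) *ᵥ z) ⬝ᵥ (aeval A (T ℝ j) *ᵥ z)) - z ⬝ᵥ z)) +
      ∑ j ∈ Finset.Icc 1 ((n - 1) / 2),
        α (2 * j + 1) *
          (2 * ((aeval A (T ℝ j) *ᵥ z) ⬝ᵥ (aeval A (T ℝ (j + 1)) *ᵥ z)) - z ⬝ᵥ A *ᵥ z) := by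
  set P : ℤ → Matrix (Fin d) (Fin d) ℝ := fun j => aeval A (T ℝ j) with hP
  have hPsym : ∀ j : ℤ, (P j)ᵀ = P j := fun j => aeval_transpose A hA _
  have hlin : z ⬝ᵥ (∑ j ∈ Finset.range (n + 1), α j • aeval A (T ℝ j)) *ᵥ z =
      ∑ j ∈ Finset.range (n + 1), α j * (z ⬝ᵥ (P (j : ℤ)) *ᵥ z) := by
    rw [my_sum_mulVec, my_dot_sum]
    refine Finset.sum_congr rfl fun j _ => ?_
    rw [Matrix.smul_mulVec, dotProduct_smul, smul_eq_mul]
  rw [hlin, sum_range_split_parity (fun j => α j * (z ⬝ᵥ (P (j : ℤ)) *ᵥ z)) n hn]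
  have h0 : P 0 = 1 := by simp [hP, T_zero]
  have h1 : P 1 = A := by simp [hP, T_one]
  have keyeven : ∀ j : ℕ, z ⬝ᵥ (P ((2 * j : ℕ) : ℤ)) *ᵥ z =
      2 * ((P (j : ℤ) *ᵥ z) ⬝ᵥ (P (j : ℤ) *ᵥ z)) - z ⬝ᵥ z := by
    intro j
    have hmul := Polynomial.Chebyshev.T_mul_T ℝ (j : ℤ) (j : ℤ)
    have hthis := congrArg (Polynomial.aeval A) hmul
    simp only [_root_.map_mul, map_add, map_ofNat, sub_self, T_zero, _root_.map_one] at hthis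
    have hm : P ((2 * j : ℕ) : ℤ) = (2 : ℝ) • (P (j : ℤ) * P (j : ℤ)) - 1 := by
      simp only [hP]
      rw [show ((2 * j : ℕ) : ℤ) = (j : ℤ) + (j : ℤ) by push_cast; ring,
        eq_sub_iff_add_eq, two_smul, ← hthis, two_mul, add_mul]
    rw [hm, Matrix.sub_mulVec, dotProduct_sub, Matrix.one_mulVec,
      Matrix.smul_mulVec, dotProduct_smul, smul_eq_mul,
      dot_split _ _ (hPsym _) z]
  have keyodd : ∀ j : ℕ, z ⬝ᵥ (P ((2 * j + 1 : ℕ) : ℤ)) *ᵥ z =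
      2 * ((P (j : ℤ) *ᵥ z) ⬝ᵥ (P ((j : ℤ) + 1) *ᵥ z)) - z ⬝ᵥ A *ᵥ z := by
    intro j
    have hmul := Polynomial.Chebyshev.T_mul_T ℝ (j : ℤ) ((j : ℤ) + 1)
    rw [show (j : ℤ) - ((j : ℤ) + 1) = -1 by ring,
      show ((-1 : ℤ)) = -(1 : ℤ) by ring, Polynomial.Chebyshev.T_neg, T_one] at hmul
    have hthis := congrArg (Polynomial.aeval A) hmul
    simp only [_root_.map_mul, map_add, map_ofNat, Polynomial.aeval_X] at hthis
    have hm : P ((2 * j + 1 : ℕ) : ℤ) = (2 : ℝ) • (P (j : ℤ) * P ((j : ℤ) + 1)) - A := by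
      simp only [hP]
      rw [show ((2 * j + 1 : ℕ) : ℤ) = (j : ℤ) + ((j : ℤ) + 1) by push_cast; ring,
        eq_sub_iff_add_eq, two_smul, ← hthis, two_mul, add_mul]
    rw [hm, Matrix.sub_mulVec, dotProduct_sub,
      Matrix.smul_mulVec, dotProduct_smul, smul_eq_mul,
      dot_split _ _ (hPsym _) z]
  congr 1
  · congr 1
    · norm_num [h0, h1, Matrix.one_mulVec]
    · refine Finset.sum_congr rfl fun j _ => ?_
      rw [keyeven j]
  · refine Finset.sum_congr rfl fun j _ => ?_
    rw [keyodd j]
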